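/- Let a, b, c ∈ SU(2) with a·b·c = 1, and let t₁ = conj(a), t₂ = conj(b), t₃ = conj(c) ∈ [0,1] where conj(g) = (1/π)arccos(Tr(g)/2). Then |t₁ − t₂| ≤ t₃ ≤ min(t₁ + t₂, 2 − t₁ − t₂). Conversely, for any (t₁, t₂, t₃) ∈ [0,1]³ satisfying these inequalities there exist a, b, c ∈ SU(2) with abc = 1 and conj(a) = t₁, conj(b) = t₂, conj(c) = t₃. -/

import Mathlib

/-- The group `SU(2)` of 2×2 unitary complex matrices of determinant 1. -/
abbrev SU2 := Matrix.specialUnitaryGroup (Fin 2) ℂ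

namespace SU2

theorem star_mem {g : Matrix (Fin 2) (Fin 2) ℂ}
    (hg : g ∈ Matrix.specialUnitaryGroup (Fin 2) ℂ) :
    star g ∈ Matrix.specialUnitaryGroup (Fin 2) ℂ := by
  refine ⟨Unitary.star_mem hg.1, ?_⟩
  have hdet : g.det = 1 := hg.2
  show Matrix.detMonoidHom (star g) = 1
  simp [Matrix.detMonoidHom, Matrix.star_eq_conjTranspose, Matrix.det_conjTranspose, hdet]

noncomputable instance : Group SU2 :=
  { (inferInstance : Monoid SU2) with
    inv := fun g => ⟨star g.1, star_mem g.2⟩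
    inv_mul_cancel := fun g => Subtype.ext (Unitary.star_mul_self_of_mem g.2.1) }

end SU2

/-- The conjugacy-class map `SU(2) → [0,1]`, `g ↦ (1/π)·arccos(Tr(g)/2)`. -/
noncomputable def conjClass (g : SU2) : ℝ :=
  Real.arccos ((Matrix.trace (g : Matrix (Fin 2) (Fin 2) ℂ)).re / 2) / Real.pi

lemma star_eq_adj (g : SU2) : star g.1 = g.1.adjugate := by
  have hu : star g.1 * g.1 = 1 := g.2.1.1
  have hinv : g.1⁻¹ = star g.1 := Matrix.inv_eq_left_inv hu
  have hdet : g.1.det = 1 := g.2.2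
  rw [← hinv, Matrix.inv_def, hdet]
  simp

lemma entry11 (g : SU2) : g.1 1 1 = (starRingEnd ℂ) (g.1 0 0) := by
  have h := congrFun (congrFun (star_eq_adj g) 1) 1
  rw [Matrix.adjugate_fin_two] at h
  simp [Matrix.star_eq_conjTranspose, Matrix.conjTranspose_apply] at h
  rw [← h]; simp

lemma entry10 (g : SU2) : g.1 1 0 = -(starRingEnd ℂ) (g.1 0 1) := by
  have h := congrFun (congrFun (star_eq_adj g) 1) 0
  rw [Matrix.adjugate_fin_two] at h
  simp [Matrix.star_eq_conjTranspose, Matrix.conjTranspose_apply] at h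
  have h2 := congrArg (starRingEnd ℂ) h
  simp at h2
  rw [h2]; simp

lemma normsq_one (g : SU2) :
    Complex.normSq (g.1 0 0) + Complex.normSq (g.1 0 1) = 1 := by
  have hdet : g.1.det = 1 := g.2.2
  rw [Matrix.det_fin_two, entry11, entry10] at hdet
  have : (Complex.normSq (g.1 0 0) : ℂ) + Complex.normSq (g.1 0 1) = 1 := by
    rw [← Complex.mul_conj, ← Complex.mul_conj]; rw [← hdet]; ring
  exact_mod_cast this
lemma arccos_antitone : Antitone Real.arccos := fun x y h => by
  simp only [Real.arccos]
  have := Real.monotone_arcsin h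
  linarith

lemma conjClass_eq (g : SU2) :
    conjClass g = Real.arccos ((g.1 0 0).re) / Real.pi := by
  unfold conjClass
  rw [Matrix.trace_fin_two, entry11]
  congr 1
  congr 1
  simp

lemma abs_re_le (g : SU2) : |(g.1 0 0).re| ≤ 1 := by
  have h := normsq_one g
  have h1 : Complex.normSq (g.1 0 0) ≤ 1 := by
    have := Complex.normSq_nonneg (g.1 0 1); linarith
  rw [abs_le]
  constructor <;> nlinarith [Complex.normSq_apply (g.1 0 0), sq_nonneg ((g.1 0 0).im)]

lemma cos_pi_conjClass (g : SU2) :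
    Real.cos (Real.pi * conjClass g) = (g.1 0 0).re := by
  rw [conjClass_eq, mul_div_cancel₀ _ (Real.pi_ne_zero)]
  have h := abs_re_le g
  rw [abs_le] at h
  exact Real.cos_arccos h.1 h.2

lemma conjClass_mem (g : SU2) : conjClass g ∈ Set.Icc (0:ℝ) 1 := by
  rw [conjClass_eq]
  constructor
  · exact div_nonneg (Real.arccos_nonneg _) Real.pi_pos.le
  · rw [div_le_one Real.pi_pos]; exact Real.arccos_le_pi _

lemma mul00 (M N : Matrix (Fin 2) (Fin 2) ℂ) :
    (M * N) 0 0 = M 0 0 * N 0 0 + M 0 1 * N 1 0 := by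
  simp [Matrix.mul_apply, Fin.sum_univ_two]

lemma inv_coe (g : SU2) : ((g⁻¹ : SU2) : Matrix (Fin 2) (Fin 2) ℂ) = star g.1 := rfl

lemma conjClass_inv (g : SU2) : conjClass g⁻¹ = conjClass g := by
  rw [conjClass_eq, conjClass_eq, inv_coe]
  congr 2

lemma sin_pi_conjClass (g : SU2) :
    Real.sin (Real.pi * conjClass g) = Real.sqrt (1 - (g.1 0 0).re ^ 2) := by
  rw [conjClass_eq, mul_div_cancel₀ _ Real.pi_ne_zero, Real.sin_arccos]

lemma normsq_re (g : SU2) :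
    (g.1 0 0).re ^ 2 + (g.1 0 0).im ^ 2 + (g.1 0 1).re ^ 2 + (g.1 0 1).im ^ 2 = 1 := by
  have h := normsq_one g
  rw [Complex.normSq_apply, Complex.normSq_apply] at h
  nlinarith [h]

lemma sin_sq (g : SU2) :
    Real.sin (Real.pi * conjClass g) ^ 2
      = (g.1 0 0).im ^ 2 + (g.1 0 1).re ^ 2 + (g.1 0 1).im ^ 2 := by
  rw [sin_pi_conjClass, Real.sq_sqrt]
  · have := normsq_re g; linarith
  · have := normsq_re g
    nlinarith [sq_nonneg ((g.1 0 0).im), sq_nonneg ((g.1 0 1).re), sq_nonneg ((g.1 0 1).im)]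

lemma coe_mul (a b : SU2) : ((a * b : SU2) : Matrix (Fin 2) (Fin 2) ℂ) = a.1 * b.1 := rfl

lemma trace_bound (a b : SU2) :
    Real.cos (Real.pi * (conjClass a + conjClass b)) ≤ (((a*b) : SU2).1 0 0).re ∧
      (((a*b) : SU2).1 0 0).re ≤ Real.cos (Real.pi * (conjClass a - conjClass b)) := by
  set x0 := (a.1 0 0).re; set x1 := (a.1 0 0).im
  set x2 := (a.1 0 1).re; set x3 := (a.1 0 1).im
  set y0 := (b.1 0 0).re; set y1 := (b.1 0 0).im
  set y2 := (b.1 0 1).re; set y3 := (b.1 0 1).im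
  have hre : (((a*b) : SU2).1 0 0).re = x0*y0 - x1*y1 - (x2*y2 + x3*y3) := by
    rw [coe_mul, mul00, entry10 b]
    simp [Complex.add_re, Complex.mul_re, Complex.neg_re, Complex.neg_im,
      Complex.conj_re, Complex.conj_im]
    ring
  have hca : Real.cos (Real.pi * conjClass a) = x0 := cos_pi_conjClass a
  have hcb : Real.cos (Real.pi * conjClass b) = y0 := cos_pi_conjClass b
  set sa := Real.sin (Real.pi * conjClass a)
  set sb := Real.sin (Real.pi * conjClass b)
  have hsa : sa ^ 2 = x1^2 + x2^2 + x3^2 := sin_sq a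
  have hsb : sb ^ 2 = y1^2 + y2^2 + y3^2 := sin_sq b
  have hsa0 : 0 ≤ sa := by
    show 0 ≤ Real.sin (Real.pi * conjClass a)
    rw [sin_pi_conjClass]; exact Real.sqrt_nonneg _
  have hsb0 : 0 ≤ sb := by
    show 0 ≤ Real.sin (Real.pi * conjClass b)
    rw [sin_pi_conjClass]; exact Real.sqrt_nonneg _
  have hCS : (x1*y1 + x2*y2 + x3*y3)^2 ≤ (sa*sb)^2 := by
    nlinarith [sq_nonneg (x1*y2 - x2*y1), sq_nonneg (x1*y3 - x3*y1), sq_nonneg (x2*y3 - x3*y2)]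
  have hCS' : |x1*y1 + x2*y2 + x3*y3| ≤ sa*sb := by
    exact abs_le.2 (abs_le_of_sq_le_sq' hCS (mul_nonneg hsa0 hsb0))
  constructor
  · rw [hre, mul_add, Real.cos_add, hca, hcb]
    have := abs_le.1 hCS'
    nlinarith [this.1, this.2]
  · rw [hre, mul_sub, Real.cos_sub, hca, hcb]
    have := abs_le.1 hCS'
    nlinarith [this.1, this.2]

lemma forward (a b c : SU2) (h : a * b * c = 1) :
    |conjClass a - conjClass b| ≤ conjClass c ∧
      conjClass c ≤ conjClass a + conjClass b ∧
      conjClass c ≤ 2 - conjClass a - conjClass b := by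
  have hc : (a * b)⁻¹ = c := inv_eq_of_mul_eq_one_right h
  rw [← hc, conjClass_inv]
  obtain ⟨hb1, hb2⟩ := trace_bound a b
  obtain ⟨h10, h11⟩ := conjClass_mem a
  obtain ⟨h20, h21⟩ := conjClass_mem b
  obtain ⟨h30, h31⟩ := conjClass_mem (a * b)
  set t₁ := conjClass a
  set t₂ := conjClass b
  have ht3 : conjClass (a*b) = Real.arccos ((((a*b) : SU2).1 0 0).re) / Real.pi :=
    conjClass_eq _
  set r := (((a*b) : SU2).1 0 0).re with hr
  have hπ := Real.pi_pos
  refine ⟨?_, ?_⟩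
  · -- |t₁ - t₂| ≤ t₃
    have hcos : r ≤ Real.cos (Real.pi * |t₁ - t₂|) := by
      rcases abs_cases (t₁ - t₂) with ⟨he, _⟩ | ⟨he, _⟩
      · rw [he]; exact hb2
      · rw [he, show Real.pi * -(t₁ - t₂) = -(Real.pi * (t₁ - t₂)) by ring, Real.cos_neg]
        exact hb2
    have habs1 : |t₁ - t₂| ≤ 1 := abs_le.2 ⟨by linarith, by linarith⟩
    have habs0 : (0:ℝ) ≤ |t₁ - t₂| := abs_nonneg _
    have harc : Real.pi * |t₁ - t₂| ≤ Real.arccos r := by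
      calc Real.pi * |t₁ - t₂|
          = Real.arccos (Real.cos (Real.pi * |t₁ - t₂|)) :=
            (Real.arccos_cos (by positivity) (by nlinarith)).symm
        _ ≤ Real.arccos r := arccos_antitone hcos
    rw [ht3, le_div_iff₀ hπ]
    linarith [harc]
  · by_cases hs : t₁ + t₂ ≤ 1
    · have harc : Real.arccos r ≤ Real.pi * (t₁ + t₂) := by
        calc Real.arccos r ≤ Real.arccos (Real.cos (Real.pi * (t₁ + t₂))) :=
              arccos_antitone hb1
          _ = Real.pi * (t₁ + t₂) := Real.arccos_cos (by positivity) (by nlinarith)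
      constructor
      · rw [ht3, div_le_iff₀ hπ]; linarith
      · linarith
    · push_neg at hs
      have hcos2 : Real.cos (Real.pi * (t₁ + t₂)) = Real.cos (Real.pi * (2 - t₁ - t₂)) := by
        rw [show Real.pi * (2 - t₁ - t₂) = 2 * Real.pi - Real.pi * (t₁ + t₂) by ring,
          Real.cos_two_pi_sub]
      have harc : Real.arccos r ≤ Real.pi * (2 - t₁ - t₂) := by
        calc Real.arccos r ≤ Real.arccos (Real.cos (Real.pi * (2 - t₁ - t₂))) := by
              rw [← hcos2]; exact arccos_antitone hb1
          _ = Real.pi * (2 - t₁ - t₂) := Real.arccos_cos (by nlinarith) (by nlinarith)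
      constructor
      · linarith
      · rw [ht3, div_le_iff₀ hπ]; linarith

def mk2 (α β : ℂ) : Matrix (Fin 2) (Fin 2) ℂ :=
  !![α, β; -(starRingEnd ℂ) β, (starRingEnd ℂ) α]

lemma mk2_mem {α β : ℂ} (h : Complex.normSq α + Complex.normSq β = 1) :
    mk2 α β ∈ Matrix.specialUnitaryGroup (Fin 2) ℂ := by
  have hC : (Complex.normSq α : ℂ) + Complex.normSq β = 1 := by exact_mod_cast h
  have h1 := Complex.mul_conj α
  have h2 := Complex.mul_conj β
  constructor
  · show mk2 α β ∈ Matrix.unitaryGroup (Fin 2) ℂ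
    rw [Matrix.mem_unitaryGroup_iff]
    ext i j
    fin_cases i <;> fin_cases j <;>
      simp [mk2, Matrix.mul_apply, Fin.sum_univ_two, Matrix.star_eq_conjTranspose,
        Matrix.conjTranspose_apply, Matrix.one_apply]
    · linear_combination h1 + h2 + hC
    · ring
    · ring
    · linear_combination h1 + h2 + hC
  · show Matrix.detMonoidHom (mk2 α β) = 1
    show (mk2 α β).det = 1
    rw [mk2, Matrix.det_fin_two_of]
    have : α * (starRingEnd ℂ) α - β * -(starRingEnd ℂ) β
        = α * (starRingEnd ℂ) α + β * (starRingEnd ℂ) β := by ring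
    rw [this, h1, h2, hC]

lemma mk2_00 (α β : ℂ) : mk2 α β 0 0 = α := by simp [mk2]
lemma mk2_01 (α β : ℂ) : mk2 α β 0 1 = β := by simp [mk2]

lemma conjClass_mk2 (p q : ℝ) (β : ℂ) (h : (mk2 (↑p + ↑q * Complex.I) β) ∈ Matrix.specialUnitaryGroup (Fin 2) ℂ) :
    conjClass ⟨_, h⟩ = Real.arccos p / Real.pi := by
  rw [conjClass_eq]
  congr 2
  show ((mk2 (↑p + ↑q * Complex.I) β) 0 0).re = p
  rw [mk2_00]
  simp

set_option maxHeartbeats 1000000 in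
lemma converse (t₁ t₂ t₃ : ℝ) (h1 : t₁ ∈ Set.Icc (0:ℝ) 1) (h2 : t₂ ∈ Set.Icc (0:ℝ) 1)
    (h3 : t₃ ∈ Set.Icc (0:ℝ) 1) (habs : |t₁ - t₂| ≤ t₃) (hsum : t₃ ≤ t₁ + t₂)
    (hsum2 : t₃ ≤ 2 - t₁ - t₂) :
    ∃ a b c : SU2, a * b * c = 1 ∧
      conjClass a = t₁ ∧ conjClass b = t₂ ∧ conjClass c = t₃ := by
  obtain ⟨h10, h11⟩ := h1
  obtain ⟨h20, h21⟩ := h2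
  obtain ⟨h30, h31⟩ := h3
  have hπ := Real.pi_pos
  set c₁ := Real.cos (Real.pi * t₁) with hc₁
  set s₁ := Real.sin (Real.pi * t₁) with hs₁
  set c₂ := Real.cos (Real.pi * t₂) with hc₂
  set s₂ := Real.sin (Real.pi * t₂) with hs₂
  set c₃ := Real.cos (Real.pi * t₃) with hc₃
  have hs10 : 0 ≤ s₁ := Real.sin_nonneg_of_nonneg_of_le_pi (by positivity) (by nlinarith)
  have hs20 : 0 ≤ s₂ := Real.sin_nonneg_of_nonneg_of_le_pi (by positivity) (by nlinarith)
  have hpyth1 : s₁^2 + c₁^2 = 1 := Real.sin_sq_add_cos_sq _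
  have hpyth2 : s₂^2 + c₂^2 = 1 := Real.sin_sq_add_cos_sq _
  -- key inequalities
  have hhigh : c₃ ≤ c₁ * c₂ + s₁ * s₂ := by
    have h' : Real.cos (Real.pi * t₃) ≤ Real.cos (Real.pi * |t₁ - t₂|) := by
      apply Real.cos_le_cos_of_nonneg_of_le_pi (by positivity) (by nlinarith)
      nlinarith [abs_nonneg (t₁ - t₂)]
    calc c₃ ≤ Real.cos (Real.pi * |t₁ - t₂|) := h'
      _ = c₁ * c₂ + s₁ * s₂ := by
          rcases abs_cases (t₁ - t₂) with ⟨he, _⟩ | ⟨he, _⟩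
          · rw [he, show Real.pi * (t₁ - t₂) = Real.pi * t₁ - Real.pi * t₂ by ring,
              Real.cos_sub]
          · rw [he, show Real.pi * -(t₁ - t₂) = -(Real.pi * t₁ - Real.pi * t₂) by ring,
              Real.cos_neg, Real.cos_sub]
  have hlow : c₁ * c₂ - s₁ * s₂ ≤ c₃ := by
    have key : Real.cos (Real.pi * (t₁ + t₂)) = c₁ * c₂ - s₁ * s₂ := by
      rw [show Real.pi * (t₁ + t₂) = Real.pi * t₁ + Real.pi * t₂ by ring, Real.cos_add]
    by_cases hs : t₁ + t₂ ≤ 1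
    · have h' : Real.cos (Real.pi * (t₁ + t₂)) ≤ Real.cos (Real.pi * t₃) :=
        Real.cos_le_cos_of_nonneg_of_le_pi (by positivity) (by nlinarith) (by nlinarith)
      rw [key] at h'; exact h'
    · push_neg at hs
      have key2 : Real.cos (Real.pi * (2 - t₁ - t₂)) = Real.cos (Real.pi * (t₁ + t₂)) := by
        rw [show Real.pi * (2 - t₁ - t₂) = 2 * Real.pi - Real.pi * (t₁ + t₂) by ring,
          Real.cos_two_pi_sub]
      have h' : Real.cos (Real.pi * (2 - t₁ - t₂)) ≤ Real.cos (Real.pi * t₃) :=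
        Real.cos_le_cos_of_nonneg_of_le_pi (by positivity) (by nlinarith) (by nlinarith)
      rw [key2, key] at h'; exact h'
  -- the mixing parameter
  set x : ℝ := if s₁ * s₂ = 0 then 0 else (c₁ * c₂ - c₃) / (s₁ * s₂) with hxdef
  have hx1 : x^2 ≤ 1 := by
    rw [hxdef]
    split_ifs with h0
    · norm_num
    · have hpos : 0 < s₁ * s₂ := lt_of_le_of_ne (mul_nonneg hs10 hs20) (Ne.symm h0)
      rw [div_pow, div_le_one (by positivity)]
      nlinarith [mul_nonneg (show (0:ℝ) ≤ s₁*s₂ - (c₁*c₂-c₃) by linarith)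
        (show (0:ℝ) ≤ s₁*s₂ + (c₁*c₂-c₃) by linarith)]
  have hxs : s₁ * s₂ * x = c₁ * c₂ - c₃ := by
    rw [hxdef]
    split_ifs with h0
    · rw [h0]; nlinarith
    · field_simp
      exact mul_div_cancel_left₀ _ h0
  set y : ℝ := Real.sqrt (1 - x^2) with hydef
  have hy2 : y^2 = 1 - x^2 := Real.sq_sqrt (by linarith)
  -- construct the elements
  have hamem : mk2 (↑c₁ + ↑s₁ * Complex.I) 0 ∈ Matrix.specialUnitaryGroup (Fin 2) ℂ := by
    apply mk2_mem
    rw [Complex.normSq_add_mul_I]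
    simp
    linarith
  have hbmem : mk2 (↑c₂ + ↑(s₂ * x) * Complex.I) (↑(s₂ * y)) ∈
      Matrix.specialUnitaryGroup (Fin 2) ℂ := by
    apply mk2_mem
    rw [Complex.normSq_add_mul_I, Complex.normSq_ofReal]
    nlinarith
  set a : SU2 := ⟨_, hamem⟩
  set b : SU2 := ⟨_, hbmem⟩
  refine ⟨a, b, (a * b)⁻¹, mul_inv_cancel _, ?_, ?_, ?_⟩
  · rw [conjClass_mk2 c₁ s₁ 0 hamem, hc₁, Real.arccos_cos (by positivity) (by nlinarith)]
    field_simp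
  · rw [conjClass_mk2 c₂ (s₂ * x) _ hbmem, hc₂, Real.arccos_cos (by positivity) (by nlinarith)]
    field_simp
  · rw [conjClass_inv, conjClass_eq]
    have ha00 : (a : Matrix (Fin 2) (Fin 2) ℂ) 0 0 = ↑c₁ + ↑s₁ * Complex.I := mk2_00 _ _
    have ha01 : (a : Matrix (Fin 2) (Fin 2) ℂ) 0 1 = 0 := mk2_01 _ _
    have hb00 : (b : Matrix (Fin 2) (Fin 2) ℂ) 0 0 = ↑c₂ + ↑(s₂ * x) * Complex.I := mk2_00 _ _
    have hre : (((a * b : SU2) : Matrix (Fin 2) (Fin 2) ℂ) 0 0).re = c₃ := by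
      rw [coe_mul, mul00, ha00, ha01, hb00]
      simp [Complex.add_re, Complex.mul_re]
      nlinarith [hxs]
    rw [hre, hc₃, Real.arccos_cos (by positivity) (by nlinarith)]
    field_simp

/-- for `a, b, c ∈ SU(2)` with `a·b·c = 1` and
`tᵢ = conj(·) ∈ [0,1]` the conjugacy classes, the triangle inequalities
`|t₁ − t₂| ≤ t₃ ≤ min(t₁ + t₂, 2 − t₁ − t₂)` hold; conversely every triple in
`[0,1]³` satisfying these inequalities is realized by some `a, b, c ∈ SU(2)`
with `abc = 1`. -/
theorem su2_triple_triangle_inequalities :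
    (∀ a b c : SU2, a * b * c = 1 →
      |conjClass a - conjClass b| ≤ conjClass c ∧
        conjClass c ≤ conjClass a + conjClass b ∧
        conjClass c ≤ 2 - conjClass a - conjClass b) ∧
    (∀ t₁ t₂ t₃ : ℝ, t₁ ∈ Set.Icc (0:ℝ) 1 → t₂ ∈ Set.Icc (0:ℝ) 1 → t₃ ∈ Set.Icc (0:ℝ) 1 →
      |t₁ - t₂| ≤ t₃ → t₃ ≤ t₁ + t₂ → t₃ ≤ 2 - t₁ - t₂ →
      ∃ a b c : SU2, a * b * c = 1 ∧
        conjClass a = t₁ ∧ conjClass b = t₂ ∧ conjClass c = t₃) :=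
  ⟨fun a b c h => forward a b c h,
   fun t₁ t₂ t₃ h1 h2 h3 habs hsum hsum2 => converse t₁ t₂ t₃ h1 h2 h3 habs hsum hsum2⟩
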